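/- arXiv:2502.12787 — 3 statements merged into one kernel-verified Lean document; each statement's English description precedes it below -/
import Mathlib

section
/- Let n ≥ 3 and k ≥ 1 be integers, let τ be an integer with 0 ≤ τ ≤ n², and set σ = n² − τ. Assume kn ≤ σ ≤ (k+1)n, that (k+1) divides σ − kn, and that k divides (k+1)n − σ. Then μ(n,τ) = ((k+1)!)^{(σ−kn)/(k+1)} · (k!)^{((k+1)n−σ)/k}. -/
/-
Upper bound: by Brègman's theorem, `per A ≤ ∏ᵢ (rᵢ!)^(1/rᵢ)` where `rᵢ` are the row sums of `A`.
The sequence `log (r!) / r` is concave for `r ≥ 1`, so each term lies below its chord through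
`k` and `k + 1`; summing these chords under `∑ rᵢ = σ` gives exactly
`((k+1)!)^a (k!)^b` with `a = (σ - kn)/(k+1)` and `b = ((k+1)n - σ)/k`.
Lower bound: `n = (k+1)a + kb`, and the direct sum of `a` all-ones blocks of size `k + 1` and `b`
of size `k` has `σ` ones and permanent `((k+1)!)^a (k!)^b`.
-/

open scoped BigOperators

namespace BGM

/-- The permanent of a square matrix with natural number entries. -/
def perm {n : ℕ} (M : Matrix (Fin n) (Fin n) ℕ) : ℕ :=
  ∑ φ : Equiv.Perm (Fin n), ∏ i, M i (φ i)

/-- `M` is a (0,1)-matrix. -/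
def IsZeroOne {n : ℕ} (M : Matrix (Fin n) (Fin n) ℕ) : Prop :=
  ∀ i j, M i j = 0 ∨ M i j = 1

/-- The number of entries of `M` equal to `0`. -/
def zeroCount {n : ℕ} (M : Matrix (Fin n) (Fin n) ℕ) : ℕ :=
  (Finset.univ.filter fun p : Fin n × Fin n => M p.1 p.2 = 0).card

/-- `𝒰(n, τ)`: the n×n (0,1)-matrices with exactly τ zero entries. -/
def Uclass (n τ : ℕ) : Set (Matrix (Fin n) (Fin n) ℕ) :=
  {M | IsZeroOne M ∧ zeroCount M = τ}

/-- `μ(n, τ) = max {per A : A ∈ 𝒰(n, τ)}`. -/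
noncomputable def mu (n τ : ℕ) : ℕ :=
  sSup (perm '' Uclass n τ)

/-- `𝒜(n, k)`: the n×n (0,1)-matrices with exactly k ones in each row and column. -/
def Aclass (n k : ℕ) : Set (Matrix (Fin n) (Fin n) ℕ) :=
  {M | IsZeroOne M ∧ (∀ i, ∑ j, M i j = k) ∧ (∀ j, ∑ i, M i j = k)}

/-- `P` is a permutation matrix. -/
def IsPermMatrix {n : ℕ} (P : Matrix (Fin n) (Fin n) ℕ) : Prop :=
  ∃ e : Equiv.Perm (Fin n), ∀ i j, P i j = if j = e i then 1 else 0

/-- `A` and `B` are combinatorially equivalent: `B = PAQ` or `B = PAᵀQ` for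
permutation matrices `P`, `Q`. -/
def CombEquiv {n : ℕ} (A B : Matrix (Fin n) (Fin n) ℕ) : Prop :=
  ∃ P Q, IsPermMatrix P ∧ IsPermMatrix Q ∧ (B = P * A * Q ∨ B = P * A.transpose * Q)

/-- Index of the block (of consecutive sizes `L`) containing position `i`. -/
def blockIdx : List ℕ → ℕ → ℕ
  | [], _ => 0
  | s :: L, i => if i < s then 0 else blockIdx L (i - s) + 1

/-- The n×n block-diagonal direct sum of all-ones blocks of sizes `L`
(with `L.sum = n`). -/
def listBlocks (n : ℕ) (L : List ℕ) : Matrix (Fin n) (Fin n) ℕ :=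
  Matrix.of fun i j => if blockIdx L (i : ℕ) = blockIdx L (j : ℕ) then 1 else 0

/-- The n×n block-diagonal matrix with a head block `B` (of size `m`) followed by
all-ones blocks of sizes `L` (with `m + L.sum = n`). -/
def headBlocks (n : ℕ) {m : ℕ} (B : Matrix (Fin m) (Fin m) ℕ) (L : List ℕ) :
    Matrix (Fin n) (Fin n) ℕ :=
  Matrix.of fun i j =>
    if h : (i : ℕ) < m ∧ (j : ℕ) < m then B ⟨(i : ℕ), h.1⟩ ⟨(j : ℕ), h.2⟩
    else if m ≤ (i : ℕ) ∧ m ≤ (j : ℕ) ∧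
        blockIdx L ((i : ℕ) - m) = blockIdx L ((j : ℕ) - m) then 1 else 0

/-- `M` with the `(i0, j0)` entry changed to `1`. -/
def setOne {n : ℕ} (M : Matrix (Fin n) (Fin n) ℕ) (i0 j0 : Fin n) :
    Matrix (Fin n) (Fin n) ℕ :=
  Matrix.of fun i j => if i = i0 ∧ j = j0 then 1 else M i j

/-- `J₃ - I₃`. -/
def J3mI3 : Matrix (Fin 3) (Fin 3) ℕ := Matrix.of fun i j => if i = j then 0 else 1

/-- `J₄ - I₄`. -/
def J4mI4 : Matrix (Fin 4) (Fin 4) ℕ := Matrix.of fun i j => if i = j then 0 else 1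

/-- `A₃`: the 3×3 all-ones matrix except the (1,1) entry is 0. -/
def A3 : Matrix (Fin 3) (Fin 3) ℕ := Matrix.of fun i j => if i = 0 ∧ j = 0 then 0 else 1

/-- `A₃ ⊕ I₂`. -/
def V5 : Matrix (Fin 5) (Fin 5) ℕ :=
  !![0,1,1,0,0; 1,1,1,0,0; 1,1,1,0,0; 0,0,0,1,0; 0,0,0,0,1]

/-- `J₃ ⊕ I₂`. -/
def S5 : Matrix (Fin 5) (Fin 5) ℕ :=
  !![1,1,1,0,0; 1,1,1,0,0; 1,1,1,0,0; 0,0,0,1,0; 0,0,0,0,1]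

/-- The head block of `W`. -/
def BW : Matrix (Fin 4) (Fin 4) ℕ :=
  !![0,0,1,1; 1,1,0,1; 1,1,1,0; 1,1,0,1]

/-- The head block of `X`. -/
def BX : Matrix (Fin 4) (Fin 4) ℕ :=
  !![0,0,1,1; 1,0,1,1; 1,1,0,1; 1,1,1,0]

/-- The head block of `Y`. -/
def BY : Matrix (Fin 4) (Fin 4) ℕ :=
  !![0,0,1,1; 1,0,1,1; 1,1,0,0; 1,1,1,1]

/-- `A₃ ⊕ I₁`. -/
def T4 : Matrix (Fin 4) (Fin 4) ℕ :=
  !![0,1,1,0; 1,1,1,0; 1,1,1,0; 0,0,0,1]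

/-- `A₄ ⊕ J₂`, where `A₄` is `J₄` with the (1,1) entry changed to 0. -/
def Q6 : Matrix (Fin 6) (Fin 6) ℕ :=
  !![0,1,1,1,0,0; 1,1,1,1,0,0; 1,1,1,1,0,0; 1,1,1,1,0,0; 0,0,0,0,1,1; 0,0,0,0,1,1]

/-- `J₃ ⊕ I₁`. -/
def M4 : Matrix (Fin 4) (Fin 4) ℕ :=
  !![1,1,1,0; 1,1,1,0; 1,1,1,0; 0,0,0,1]

open Finset
open scoped Nat

section ZeroOne

variable {n : ℕ}

def diagonals (M : Matrix (Fin n) (Fin n) ℕ) : Finset (Equiv.Perm (Fin n)) :=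
  {σ | ∀ i, M i (σ i) = 1}

lemma perm_eq_card_diagonals {M : Matrix (Fin n) (Fin n) ℕ} (hM : IsZeroOne M) :
    perm M = #(diagonals M) := by
  rw [perm, diagonals, card_filter]
  refine sum_congr rfl fun σ _ => ?_
  split_ifs with h
  · exact prod_eq_one fun i _ => h i
  · obtain ⟨i, hi⟩ := not_forall.1 h
    exact prod_eq_zero (mem_univ i) ((hM i (σ i)).resolve_right hi)

lemma perm_eq_zero_of_row_eq_zero {M : Matrix (Fin n) (Fin n) ℕ} {i : Fin n}
    (h : ∀ j, M i j = 0) : perm M = 0 :=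
  sum_eq_zero fun σ _ => prod_eq_zero (mem_univ i) (h (σ i))

lemma sum_sum_add_zeroCount {M : Matrix (Fin n) (Fin n) ℕ} (hM : IsZeroOne M) :
    ∑ i, ∑ j, M i j + zeroCount M = n ^ 2 := by
  have hentry (i j : Fin n) : M i j + (if M i j = 0 then 1 else 0) = 1 := by
    rcases hM i j with h | h <;> simp [h]
  rw [zeroCount, card_filter,
    Fintype.sum_prod_type' (f := fun i j => if M i j = 0 then 1 else 0)]
  simp_rw [← sum_add_distrib, hentry]
  simp [sq]

lemma sum_row_eq_card {M : Matrix (Fin n) (Fin n) ℕ} (hM : IsZeroOne M) (i : Fin n) :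
    ∑ j, M i j = #{j | M i j = 1} := by
  rw [card_filter]
  exact sum_congr rfl fun j _ => by rcases hM i j with h | h <;> simp [h]

end ZeroOne

section Minors

variable {n : ℕ}

/-- A permutation sending `i` to `j`, read on the complements of `i` and `j`. -/
def permFixing (i j : Fin (n + 1)) :
    {σ : Equiv.Perm (Fin (n + 1)) // σ i = j} ≃ Equiv.Perm (Fin n) :=
  ((Equiv.subtypeEquiv (Equiv.equivCongr (finSuccEquiv' i) (Equiv.refl _))
      (fun σ => by simp)).trans (Equiv.optionSubtype j)).trans
    (Equiv.equivCongr (Equiv.refl _) (finSuccAboveEquiv j).symm)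

lemma succAbove_permFixing (i j : Fin (n + 1)) (σ : {σ : Equiv.Perm (Fin (n + 1)) // σ i = j})
    (l : Fin n) : j.succAbove (permFixing i j σ l) = σ.1 (i.succAbove l) := by
  have h (y : {x // x ≠ j}) : j.succAbove ((finSuccAboveEquiv j).symm y) = y :=
    congrArg Subtype.val ((finSuccAboveEquiv j).apply_symm_apply y)
  refine (h _).trans ?_
  show σ.1 ((finSuccEquiv' i).symm (some l)) = _
  rw [finSuccEquiv'_symm_some]

lemma card_filter_diagonals_eq_perm_submatrix {A : Matrix (Fin (n + 1)) (Fin (n + 1)) ℕ}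
    (hA : IsZeroOne A) {i j : Fin (n + 1)} (hij : A i j = 1) :
    #{σ ∈ diagonals A | σ i = j} = perm (A.submatrix i.succAbove j.succAbove) := by
  rw [perm_eq_card_diagonals (M := A.submatrix _ _) fun _ _ => hA _ _]
  refine card_bij' (fun σ hσ => permFixing i j ⟨σ, (mem_filter.1 hσ).2⟩)
    (fun τ _ => ((permFixing i j).symm τ).1) (fun σ hσ => ?_) (fun τ hτ => ?_)
    (fun σ _ => by simp) (fun τ _ => by simp)
  · simp only [diagonals, mem_filter, mem_univ, true_and] at hσ ⊢
    intro l
    rw [Matrix.submatrix_apply, succAbove_permFixing]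
    exact hσ.1 _
  · simp only [diagonals, mem_filter, mem_univ, true_and] at hτ ⊢
    set σ := (permFixing i j).symm τ
    refine ⟨(Fin.forall_iff_succAbove i).2 ⟨by rw [σ.2]; exact hij, fun l => ?_⟩, σ.2⟩
    have := succAbove_permFixing i j σ l
    rw [Equiv.apply_symm_apply] at this
    rw [← this]
    exact hτ l

end Minors

section Entropy

open Real

/-- Jensen's inequality for the convex function `x log x`, exponentiated. -/
lemma pow_sum_le_card_pow_mul_prod {ι : Type*} (s : Finset ι) (t : ι → ℕ) :
    (∑ j ∈ s, t j) ^ (∑ j ∈ s, t j) ≤ #s ^ (∑ j ∈ s, t j) * ∏ j ∈ s, t j ^ t j := by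
  set T := ∑ j ∈ s, t j
  rcases Nat.eq_zero_or_pos T with hT | hT
  · rw [hT, pow_zero, pow_zero, one_mul, prod_eq_one fun j hj => by
      rw [sum_eq_zero_iff.1 hT j hj, pow_zero]]
  have hs : (0 : ℝ) < #s := by
    exact_mod_cast card_pos.2 (nonempty_of_sum_ne_zero hT.ne')
  have hjensen := convexOn_mul_log.map_sum_le (t := s) (w := fun _ => (#s : ℝ)⁻¹)
    (p := fun j => (t j : ℝ)) (fun _ _ => by positivity)
    (by rw [sum_const, nsmul_eq_mul, mul_inv_cancel₀ hs.ne'])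
    (fun _ _ => Set.mem_Ici.2 (by positivity))
  simp only [smul_eq_mul, ← mul_sum, ← Nat.cast_sum] at hjensen
  rw [log_mul (inv_ne_zero hs.ne') (by positivity), log_inv] at hjensen
  have hlog : (T : ℝ) * log T ≤ T * log #s + ∑ j ∈ s, (t j : ℝ) * log (t j) := by
    have := mul_le_mul_of_nonneg_left hjensen hs.le
    field_simp at this
    linarith
  have hexp (x : ℝ) (k : ℕ) (hx : 0 < x ^ k) : x ^ k = exp (k * log x) := by
    rw [← log_pow, exp_log hx]
  have hpow (x : ℕ) : (0 : ℝ) < (x : ℝ) ^ x := by exact_mod_cast Nat.pow_self_pos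
  suffices h : (T : ℝ) ^ T ≤ (#s : ℝ) ^ T * ∏ j ∈ s, (t j : ℝ) ^ t j by exact_mod_cast h
  rw [hexp _ _ (hpow T), hexp _ _ (pow_pos hs T), prod_congr rfl fun j _ => hexp _ _ (hpow (t j)),
    ← exp_sum, ← exp_add]
  exact exp_le_exp.2 hlog

lemma card_pow_card_le_mul_prod_card_fiber {α β : Type*} [DecidableEq β] (D : Finset α)
    (g : α → β) (s : Finset β) (hg : ∀ d ∈ D, g d ∈ s) :
    #D ^ #D ≤ #s ^ #D * ∏ d ∈ D, #{d' ∈ D | g d' = g d} := by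
  have hsum : ∑ b ∈ s, #{d ∈ D | g d = b} = #D := (card_eq_sum_card_fiberwise hg).symm
  have hprod : ∏ b ∈ s, #{d ∈ D | g d = b} ^ #{d ∈ D | g d = b} =
      ∏ d ∈ D, #{d' ∈ D | g d' = g d} := by
    rw [← prod_fiberwise_of_maps_to' hg (fun b => #{d ∈ D | g d = b})]
    exact prod_congr rfl fun b _ => (prod_const _).symm
  simpa only [hsum, hprod] using pow_sum_le_card_pow_mul_prod s fun b => #{d ∈ D | g d = b}

end Entropy

section Bregman

noncomputable def facRoot (r : ℕ) : ℝ := (r ! : ℝ) ^ (r : ℝ)⁻¹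

lemma facRoot_pos (r : ℕ) : 0 < facRoot r :=
  Real.rpow_pos_of_pos (by positivity) _

lemma facRoot_pow_self (r : ℕ) : facRoot r ^ r = r ! := by
  rcases Nat.eq_zero_or_pos r with rfl | hr
  · simp
  · rw [facRoot, ← Real.rpow_natCast, ← Real.rpow_mul (by positivity),
      inv_mul_cancel₀ (by positivity), Real.rpow_one]

lemma log_facRoot (r : ℕ) : Real.log (facRoot r) = Real.log r ! / r := by
  rw [facRoot, Real.log_rpow (by positivity), div_eq_inv_mul]

lemma natCast_mul_prod_facRoot_sub {κ : Type*} [Fintype κ] {v : κ → ℕ}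
    (hv : ∀ j, v j = 0 ∨ v j = 1) (hr : 1 ≤ ∑ j, v j) :
    (∑ j, v j : ℕ) * ∏ j, facRoot (∑ i, v i - v j) =
      facRoot (∑ j, v j - 1) * facRoot (∑ j, v j) ^ Fintype.card κ := by
  set r := ∑ j, v j
  have hv1 (j : κ) : v j ≤ 1 := by rcases hv j with h | h <;> simp [h]
  have hrκ : r ≤ Fintype.card κ := by
    simpa using sum_le_sum fun j (_ : j ∈ univ) => hv1 j
  have hterm (j : κ) : facRoot (r - v j) = facRoot (r - 1) ^ v j * facRoot r ^ (1 - v j) := by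
    rcases hv j with h | h <;> simp [h]
  have hfac : (r : ℝ) * facRoot (r - 1) ^ (r - 1) = facRoot r ^ r := by
    rw [facRoot_pow_self, facRoot_pow_self, ← Nat.cast_mul, Nat.mul_factorial_pred (by omega)]
  rw [prod_congr rfl fun j _ => hterm j, prod_mul_distrib, prod_pow_eq_pow_sum,
    prod_pow_eq_pow_sum, sum_tsub_distrib _ fun j _ => hv1 j]
  simp only [sum_const, card_univ, smul_eq_mul, mul_one]
  calc (r : ℝ) * (facRoot (r - 1) ^ r * facRoot r ^ (Fintype.card κ - r))
      = facRoot (r - 1) * ((r : ℝ) * facRoot (r - 1) ^ (r - 1)) *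
          facRoot r ^ (Fintype.card κ - r) := by
        rw [← Nat.sub_add_cancel hr, pow_succ]; simp only [Nat.add_sub_cancel]; ring
    _ = facRoot (r - 1) * facRoot r ^ Fintype.card κ := by
        rw [hfac, mul_assoc, ← pow_add, Nat.add_sub_cancel' hrκ]

variable {n : ℕ}

lemma pow_card_diagonals_le {A : Matrix (Fin n) (Fin n) ℕ} (hA : IsZeroOne A) :
    (#(diagonals A) ^ #(diagonals A)) ^ n ≤
      ∏ σ ∈ diagonals A, ∏ x, (∑ c, A x c) * #{τ ∈ diagonals A | τ x = σ x} := by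
  set D := diagonals A
  have hrow (x : Fin n) :
      #D ^ #D ≤ (∑ c, A x c) ^ #D * ∏ σ ∈ D, #{τ ∈ D | τ x = σ x} := by
    rw [sum_row_eq_card hA]
    exact card_pow_card_le_mul_prod_card_fiber D (fun σ => σ x) _ fun σ hσ => by
      simpa [D, diagonals] using (mem_filter.1 hσ).2 x
  calc (#D ^ #D) ^ n = ∏ _x : Fin n, #D ^ #D := by simp
    _ ≤ ∏ x, ((∑ c, A x c) ^ #D * ∏ σ ∈ D, #{τ ∈ D | τ x = σ x}) :=
        prod_le_prod' fun x _ => hrow x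
    _ = ∏ x, ∏ σ ∈ D, (∑ c, A x c) * #{τ ∈ D | τ x = σ x} := by
        simp_rw [prod_mul_distrib, prod_const]
    _ = _ := prod_comm

section Step

variable (IH : ∀ B : Matrix (Fin n) (Fin n) ℕ, IsZeroOne B →
  (perm B : ℝ) ≤ ∏ i, facRoot (∑ j, B i j))
include IH

lemma facRoot_mul_card_filter_diagonals_le {A : Matrix (Fin (n + 1)) (Fin (n + 1)) ℕ}
    (hA : IsZeroOne A) {x j : Fin (n + 1)} (hxj : A x j = 1) :
    facRoot (∑ c, A x c - 1) * #{τ ∈ diagonals A | τ x = j} ≤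
      ∏ y, facRoot (∑ c, A y c - A y j) := by
  rw [card_filter_diagonals_eq_perm_submatrix hA hxj, Fin.prod_univ_succAbove _ x, hxj]
  refine mul_le_mul_of_nonneg_left ((IH _ fun _ _ => hA _ _).trans_eq ?_) (facRoot_pos _).le
  exact prod_congr rfl fun l _ => by
    rw [Fin.sum_univ_succAbove (A (x.succAbove l)) j, Nat.add_sub_cancel_left]

lemma prod_mul_card_filter_diagonals_le {A : Matrix (Fin (n + 1)) (Fin (n + 1)) ℕ}
    (hA : IsZeroOne A) {σ : Equiv.Perm (Fin (n + 1))} (hσ : σ ∈ diagonals A) :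
    ∏ x, ((∑ c, A x c : ℕ) * #{τ ∈ diagonals A | τ x = σ x} : ℝ) ≤
      (∏ x, facRoot (∑ c, A x c)) ^ (n + 1) := by
  set r : Fin (n + 1) → ℕ := fun x => ∑ c, A x c
  have hσ1 : ∀ x, A x (σ x) = 1 := by simpa [diagonals] using hσ
  have hr (x : Fin (n + 1)) : 1 ≤ r x :=
    (hσ1 x).symm.le.trans (single_le_sum (fun _ _ => Nat.zero_le _) (mem_univ (σ x)))
  have hG : 0 < ∏ x, facRoot (r x - 1) := prod_pos fun x _ => facRoot_pos _
  refine le_of_mul_le_mul_left ?_ hG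
  calc (∏ x, facRoot (r x - 1)) * ∏ x, ((r x : ℝ) * #{τ ∈ diagonals A | τ x = σ x})
      = (∏ x, (r x : ℝ)) * ∏ x, (facRoot (r x - 1) * #{τ ∈ diagonals A | τ x = σ x}) := by
        simp_rw [prod_mul_distrib]; ring
    _ ≤ (∏ x, (r x : ℝ)) * ∏ x, ∏ y, facRoot (r y - A y (σ x)) := by
        refine mul_le_mul_of_nonneg_left (prod_le_prod (fun x _ => ?_) fun x _ =>
          facRoot_mul_card_filter_diagonals_le IH hA (hσ1 x)) (by positivity)
        exact mul_nonneg (facRoot_pos _).le (Nat.cast_nonneg _)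
    _ = ∏ y, ((r y : ℝ) * ∏ j, facRoot (r y - A y j)) := by
        rw [prod_comm, ← prod_mul_distrib]
        exact prod_congr rfl fun y _ => by rw [Equiv.prod_comp σ fun j => facRoot (r y - A y j)]
    _ = ∏ y, (facRoot (r y - 1) * facRoot (r y) ^ (n + 1)) :=
        prod_congr rfl fun y _ =>
          (natCast_mul_prod_facRoot_sub (hA y) (hr y)).trans (by rw [Fintype.card_fin])
    _ = (∏ x, facRoot (r x - 1)) * (∏ x, facRoot (r x)) ^ (n + 1) := by
        rw [prod_mul_distrib, prod_pow]

lemma perm_le_prod_facRoot_succ {A : Matrix (Fin (n + 1)) (Fin (n + 1)) ℕ} (hA : IsZeroOne A) :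
    (perm A : ℝ) ≤ ∏ x, facRoot (∑ c, A x c) := by
  rw [perm_eq_card_diagonals hA]
  set P := #(diagonals A)
  have hpos : 0 < ∏ x, facRoot (∑ c, A x c) := prod_pos fun x _ => facRoot_pos _
  rcases Nat.eq_zero_or_pos P with hP | hP
  · rw [hP, Nat.cast_zero]
    exact hpos.le
  refine le_of_pow_le_pow_left₀ (by positivity : P * (n + 1) ≠ 0) hpos.le ?_
  calc (P : ℝ) ^ (P * (n + 1)) = ((P ^ P) ^ (n + 1) : ℕ) := by push_cast; ring
    _ ≤ ((∏ σ ∈ diagonals A, ∏ x, (∑ c, A x c) * #{τ ∈ diagonals A | τ x = σ x} : ℕ) : ℝ) := by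
        exact_mod_cast pow_card_diagonals_le hA
    _ ≤ ∏ _σ ∈ diagonals A, (∏ x, facRoot (∑ c, A x c)) ^ (n + 1) := by
        simp only [Nat.cast_prod, Nat.cast_mul]
        exact prod_le_prod (fun σ _ => by positivity) fun σ hσ =>
          prod_mul_card_filter_diagonals_le IH hA hσ
    _ = (∏ x, facRoot (∑ c, A x c)) ^ (P * (n + 1)) := by rw [prod_const, ← pow_mul, mul_comm]

end Step

/-- Brègman's theorem (Minc's conjecture), by Schrijver's argument: the number of diagonals
through an entry is the permanent of its minor, so induction applies inside Jensen's inequality. -/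
theorem perm_le_prod_facRoot :
    ∀ {n : ℕ} {A : Matrix (Fin n) (Fin n) ℕ}, IsZeroOne A →
      (perm A : ℝ) ≤ ∏ i, facRoot (∑ j, A i j)
  | 0, A, _ => by simp [perm]
  | _ + 1, _, hA => perm_le_prod_facRoot_succ (fun _ hB => perm_le_prod_facRoot hB) hA

end Bregman

section Concavity

open Real

lemma inv_add_one_le_log_add_one_sub_log {x : ℝ} (hx : 0 < x) :
    (x + 1)⁻¹ ≤ log (x + 1) - log x := by
  have h := one_sub_inv_le_log_of_pos (div_pos (by linarith : 0 < x + 1) hx)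
  rw [log_div (by linarith) hx.ne', inv_div] at h
  calc (x + 1)⁻¹ = 1 - x / (x + 1) := by field_simp; ring
    _ ≤ _ := h

lemma log_add_one_sub_log_le_inv {x : ℝ} (hx : 0 < x) : log (x + 1) - log x ≤ x⁻¹ := by
  have h := log_le_sub_one_of_pos (div_pos (by linarith : 0 < x + 1) hx)
  rw [log_div (by linarith) hx.ne'] at h
  calc log (x + 1) - log x ≤ (x + 1) / x - 1 := h
    _ = x⁻¹ := by field_simp; ring

lemma log_factorial_le (r : ℕ) : log r ! ≤ r * log (r + 1) - r / 2 := by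
  induction r with
  | zero => simp
  | succ r ih =>
    have hstep := inv_add_one_le_log_add_one_sub_log (by positivity : (0 : ℝ) < r + 1)
    have hhalf : (1 : ℝ) / 2 ≤ ((r : ℝ) + 1) * ((r : ℝ) + 1 + 1)⁻¹ := by
      rw [← div_eq_mul_inv, div_le_div_iff₀ (by norm_num) (by positivity)]
      linarith
    have := mul_le_mul_of_nonneg_left hstep (by positivity : (0 : ℝ) ≤ r + 1)
    rw [Nat.factorial_succ, Nat.cast_mul, log_mul (by positivity) (by positivity)]
    push_cast
    nlinarith

lemma log_facRoot_concave {r : ℕ} (hr : 1 ≤ r) :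
    log (facRoot (r + 2)) - log (facRoot (r + 1)) ≤
      log (facRoot (r + 1)) - log (facRoot r) := by
  have hr' : (0 : ℝ) < r := by exact_mod_cast hr
  set F := log r !
  set a := log ((r : ℝ) + 1)
  set b := log ((r : ℝ) + 2)
  have h1 : log (r + 1)! = F + a := by
    rw [Nat.factorial_succ, Nat.cast_mul, log_mul (by positivity) (by positivity)]
    push_cast
    ring
  have h2 : log (r + 2)! = F + a + b := by
    rw [Nat.factorial_succ, Nat.cast_mul, log_mul (by positivity) (by positivity), h1,
      show ((r + 1 + 1 : ℕ) : ℝ) = r + 2 by push_cast; ring]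
    ring
  have hF : F ≤ r * a - r / 2 := log_factorial_le r
  have hba : b - a ≤ ((r : ℝ) + 1)⁻¹ := by
    have := log_add_one_sub_log_le_inv (by positivity : (0 : ℝ) < r + 1)
    rwa [add_assoc, one_add_one_eq_two] at this
  have hkey : 2 * F ≤ r * (r + 3) * a - r * (r + 1) * b := by
    have := mul_le_mul_of_nonneg_left hba (by positivity : (0 : ℝ) ≤ r * (r + 1))
    have hr1 : (r : ℝ) * (r + 1) * ((r : ℝ) + 1)⁻¹ = r := by field_simp
    nlinarith
  rw [log_facRoot, log_facRoot, log_facRoot, h1, h2, ← sub_nonneg]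
  push_cast
  have hid : (F + a) / (r + 1) - F / r - ((F + a + b) / (r + 2) - (F + a) / (r + 1)) =
      (r * (r + 3) * a - r * (r + 1) * b - 2 * F) / (r * (r + 1) * (r + 2)) := by
    field_simp
    ring
  rw [hid]
  exact div_nonneg (by linarith) (by positivity)

lemma le_chord_of_sub_antitone {u : ℕ → ℝ}
    (hu : ∀ r, 1 ≤ r → u (r + 2) - u (r + 1) ≤ u (r + 1) - u r) {k r : ℕ} (hk : 1 ≤ k)
    (hr : 1 ≤ r) : u r ≤ u k + ((r : ℝ) - k) * (u (k + 1) - u k) := by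
  have hanti (i j : ℕ) (hi : 1 ≤ i) (hij : i ≤ j) : u (j + 1) - u j ≤ u (i + 1) - u i := by
    induction j, hij using Nat.le_induction with
    | base => exact le_rfl
    | succ j hij ih => exact (hu j (hi.trans hij)).trans ih
  rcases le_total k r with hkr | hrk
  · have h : u r - u k ≤ ∑ j ∈ Ico k r, (u (k + 1) - u k) := by
      rw [← sum_Ico_sub u hkr]
      exact sum_le_sum fun j hj => hanti k j hk (mem_Ico.1 hj).1
    rw [sum_const, Nat.card_Ico, nsmul_eq_mul, Nat.cast_sub hkr] at h
    linarith
  · have h : ∑ j ∈ Ico r k, (u (k + 1) - u k) ≤ u k - u r := by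
      rw [← sum_Ico_sub u hrk]
      exact sum_le_sum fun j hj => hanti j k (hr.trans (mem_Ico.1 hj).1) (mem_Ico.1 hj).2.le
    rw [sum_const, Nat.card_Ico, nsmul_eq_mul, Nat.cast_sub hrk] at h
    linarith

lemma prod_facRoot_le {ι : Type*} [Fintype ι] {k a b : ℕ} (hk : 1 ≤ k)
    (hcard : Fintype.card ι = (k + 1) * a + k * b) {r : ι → ℕ} (hr : ∀ i, 1 ≤ r i)
    (hsum : ∑ i, r i = (k + 1) ^ 2 * a + k ^ 2 * b) :
    ∏ i, facRoot (r i) ≤ ((k + 1)! ^ a * k ! ^ b : ℕ) := by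
  rw [← log_le_log_iff (prod_pos fun i _ => facRoot_pos _) (by positivity),
    log_prod fun i _ => (facRoot_pos _).ne']
  calc ∑ i, log (facRoot (r i))
      ≤ ∑ i, (log (facRoot k) + ((r i : ℝ) - k) * (log (facRoot (k + 1)) - log (facRoot k))) :=
        sum_le_sum fun i _ => le_chord_of_sub_antitone (u := fun m => log (facRoot m))
          (fun _ => log_facRoot_concave) hk (hr i)
    _ = ((k + 1) * a) * log (facRoot (k + 1)) + (k * b) * log (facRoot k) := by
        rw [sum_add_distrib, ← sum_mul, sum_sub_distrib, ← Nat.cast_sum, hsum]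
        simp only [sum_const, card_univ, hcard, nsmul_eq_mul]
        push_cast
        ring
    _ = log ((k + 1)! ^ a * k ! ^ b : ℕ) := by
        rw [log_facRoot, log_facRoot]
        push_cast
        rw [log_mul (by positivity) (by positivity), log_pow, log_pow]
        field_simp

end Concavity

lemma perm_le_of_sum_eq {n k a b : ℕ} (hk : 1 ≤ k) (hn : n = (k + 1) * a + k * b)
    {M : Matrix (Fin n) (Fin n) ℕ} (hM : IsZeroOne M)
    (hsum : ∑ i, ∑ j, M i j = (k + 1) ^ 2 * a + k ^ 2 * b) :
    perm M ≤ (k + 1)! ^ a * k ! ^ b := by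
  by_cases hrow : ∃ i, ∑ j, M i j = 0
  · obtain ⟨i, hi⟩ := hrow
    rw [perm_eq_zero_of_row_eq_zero fun j => sum_eq_zero_iff.1 hi j (mem_univ j)]
    exact Nat.zero_le _
  have hr (i : Fin n) : 1 ≤ ∑ j, M i j := Nat.one_le_iff_ne_zero.2 fun h => hrow ⟨i, h⟩
  exact_mod_cast (perm_le_prod_facRoot hM).trans
    (prod_facRoot_le hk (by rw [Fintype.card_fin, hn]) hr hsum)

section Blocks

variable {n : ℕ} {ι : Type*} [DecidableEq ι]

def blockOnes (f : Fin n → ι) : Matrix (Fin n) (Fin n) ℕ :=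
  Matrix.of fun i j => if f i = f j then 1 else 0

lemma isZeroOne_blockOnes (f : Fin n → ι) : IsZeroOne (blockOnes f) := fun i j => by
  rw [blockOnes, Matrix.of_apply]
  split_ifs <;> simp

variable [Fintype ι]

lemma perm_blockOnes (f : Fin n → ι) :
    perm (blockOnes f) = ∏ c, (Fintype.card {x // f x = c})! := by
  rw [perm_eq_card_diagonals (isZeroOne_blockOnes f), ← DomMulAct.stabilizer_card,
    Fintype.card_subtype]
  congr 1
  ext σ
  simp [diagonals, blockOnes, funext_iff, eq_comm]

lemma sum_blockOnes (f : Fin n → ι) :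
    ∑ i, ∑ j, blockOnes f i j = ∑ c, Fintype.card {x // f x = c} ^ 2 := by
  rw [← sum_fiberwise univ f]
  refine sum_congr rfl fun c _ => ?_
  have hrow : ∀ i ∈ ({i | f i = c} : Finset (Fin n)),
      ∑ j, blockOnes f i j = Fintype.card {x // f x = c} := by
    intro i hi
    obtain rfl := (mem_filter.1 hi).2
    rw [Fintype.card_subtype, card_filter]
    simp [blockOnes, eq_comm]
  rw [sum_congr rfl hrow, sum_const, ← Fintype.card_subtype, smul_eq_mul, sq]

lemma exists_card_fiber_eq (size : ι → ℕ) (hn : ∑ c, size c = n) :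
    ∃ f : Fin n → ι, ∀ c, Fintype.card {x // f x = c} = size c := by
  let e : Fin n ≃ Σ c, Fin (size c) := (Fintype.equivFinOfCardEq (by simp [hn])).symm
  refine ⟨fun x => (e x).1, fun c => ?_⟩
  calc Fintype.card {x // (e x).1 = c}
      = Fintype.card {s : Σ c, Fin (size c) // s.1 = c} :=
        Fintype.card_congr (e.subtypeEquiv fun _ => Iff.rfl)
    _ = size c := by rw [Fintype.card_congr (Equiv.sigmaSubtype c), Fintype.card_fin]

end Blocks

lemma exists_isZeroOne_sum_eq_perm_eq {n : ℕ} (k a b : ℕ) (hn : n = (k + 1) * a + k * b) :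
    ∃ M : Matrix (Fin n) (Fin n) ℕ, IsZeroOne M ∧
      ∑ i, ∑ j, M i j = (k + 1) ^ 2 * a + k ^ 2 * b ∧ perm M = (k + 1)! ^ a * k ! ^ b := by
  obtain ⟨f, hf⟩ := exists_card_fiber_eq (n := n)
    (Sum.elim (fun _ : Fin a => k + 1) fun _ : Fin b => k) (by simp [hn, mul_comm])
  refine ⟨blockOnes f, isZeroOne_blockOnes f, ?_, ?_⟩
  · simp [sum_blockOnes, hf, mul_comm]
  · simp [perm_blockOnes, hf]

theorem stmt0_general (n k τ σ : ℕ) (hk : 1 ≤ k) (hτ : τ ≤ n ^ 2)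
    (hσ : σ = n ^ 2 - τ)
    (h1 : k * n ≤ σ) (h2 : σ ≤ (k + 1) * n)
    (h3 : (k + 1) ∣ σ - k * n) (h4 : k ∣ (k + 1) * n - σ) :
    mu n τ = (Nat.factorial (k + 1)) ^ ((σ - k * n) / (k + 1)) *
      (Nat.factorial k) ^ (((k + 1) * n - σ) / k) := by
  obtain ⟨a, ha⟩ := h3
  obtain ⟨b, hb⟩ := h4
  have hσa : σ = k * n + (k + 1) * a := by omega
  have hn : n = (k + 1) * a + k * b := by
    have : (k + 1) * n = σ + k * b := by omega
    linarith
  have hσ' : σ = (k + 1) ^ 2 * a + k ^ 2 * b := by rw [hσa, hn]; ring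
  rw [ha, hb, Nat.mul_div_cancel_left _ (by omega), Nat.mul_div_cancel_left _ hk]
  have hU {M : Matrix (Fin n) (Fin n) ℕ} (hM : IsZeroOne M) :
      zeroCount M = τ ↔ ∑ i, ∑ j, M i j = σ := by
    have := sum_sum_add_zeroCount hM
    omega
  obtain ⟨M, hM, hsum, hperm⟩ := exists_isZeroOne_sum_eq_perm_eq k a b hn
  refine IsGreatest.csSup_eq ⟨⟨M, ⟨hM, (hU hM).2 (hsum.trans hσ'.symm)⟩, hperm⟩, ?_⟩
  rintro _ ⟨M, ⟨hM, hz⟩, rfl⟩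
  exact perm_le_of_sum_eq hk hn hM (((hU hM).1 hz).trans hσ')

theorem stmt0 (n k τ σ : ℕ) (hn : 3 ≤ n) (hk : 1 ≤ k) (hτ : τ ≤ n ^ 2)
    (hσ : σ = n ^ 2 - τ)
    (h1 : k * n ≤ σ) (h2 : σ ≤ (k + 1) * n)
    (h3 : (k + 1) ∣ σ - k * n) (h4 : k ∣ (k + 1) * n - σ) :
    mu n τ = (Nat.factorial (k + 1)) ^ ((σ - k * n) / (k + 1)) *
      (Nat.factorial k) ^ (((k + 1) * n - σ) / k) :=
  stmt0_general n k τ σ hk hτ hσ h1 h2 h3 h4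

end BGM
end

section
/- Let m and t be integers with m ≥ 2 and t ≥ 1. Then ((m+t−1)!)^{1/(m+t−1)} · (m!)^{1/m} > ((m+t)!)^{1/(m+t)} · ((m−1)!)^{1/(m−1)}, where the powers are real powers. -/
open scoped BigOperators

namespace BGM

noncomputable def gfun (n : ℕ) : ℝ := Real.log n.factorial / n

lemma pairing (p : ℕ) :
    2 * Real.log (p.factorial) ≤ (p:ℝ) * (2 * Real.log ((p:ℝ)+1) - Real.log 4) := by
  have hfac : (p.factorial : ℝ) = ∏ k ∈ Finset.range p, ((k:ℝ)+1) := by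
    rw [← Finset.prod_range_add_one_eq_factorial]
    push_cast
    rfl
  have hlog : Real.log p.factorial = ∑ k ∈ Finset.range p, Real.log ((k:ℝ)+1) := by
    rw [hfac, Real.log_prod]
    intro k _
    positivity
  have hrefl : ∑ k ∈ Finset.range p, Real.log ((k:ℝ)+1)
      = ∑ k ∈ Finset.range p, Real.log ((p:ℝ)-k) := by
    rw [← Finset.sum_range_reflect]
    apply Finset.sum_congr rfl
    intro k hk
    have hk' : k < p := Finset.mem_range.mp hk
    congr 1
    have h1 : p - 1 - k = p - (k+1) := by omega
    rw [h1, Nat.cast_sub (by omega : k + 1 ≤ p)]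
    push_cast
    ring
  have key : ∀ k ∈ Finset.range p,
      Real.log ((k:ℝ)+1) + Real.log ((p:ℝ)-k) ≤ 2 * Real.log ((p:ℝ)+1) - Real.log 4 := by
    intro k hk
    have hk' : k < p := Finset.mem_range.mp hk
    have hkp : (k:ℝ) + 1 ≤ (p:ℝ) := by exact_mod_cast hk'
    have h1 : (0:ℝ) < (k:ℝ)+1 := by positivity
    have h2 : (0:ℝ) < (p:ℝ)-k := by linarith
    rw [← Real.log_mul (by positivity) (by positivity)]
    have h3 : ((k:ℝ)+1) * ((p:ℝ)-k) ≤ ((p:ℝ)+1)^2/4 := by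
      nlinarith [sq_nonneg ((p:ℝ) - 1 - 2*k)]
    calc Real.log (((k:ℝ)+1) * ((p:ℝ)-k)) ≤ Real.log (((p:ℝ)+1)^2/4) :=
          Real.log_le_log (by positivity) h3
      _ = 2 * Real.log ((p:ℝ)+1) - Real.log 4 := by
          rw [Real.log_div (by positivity) (by norm_num), Real.log_pow]
          push_cast; ring
  have hsum : 2 * Real.log p.factorial
      = ∑ k ∈ Finset.range p, (Real.log ((k:ℝ)+1) + Real.log ((p:ℝ)-k)) := by
    rw [Finset.sum_add_distrib, ← hrefl, hlog]; ring
  rw [hsum]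
  calc ∑ k ∈ Finset.range p, (Real.log ((k:ℝ)+1) + Real.log ((p:ℝ)-k))
      ≤ ∑ _k ∈ Finset.range p, (2 * Real.log ((p:ℝ)+1) - Real.log 4) :=
        Finset.sum_le_sum key
    _ = (p:ℝ) * (2 * Real.log ((p:ℝ)+1) - Real.log 4) := by
        rw [Finset.sum_const, Finset.card_range, nsmul_eq_mul]

lemma log4_gt_one : (1:ℝ) < Real.log 4 := by
  have h : (4:ℝ) = 2^2 := by norm_num
  rw [h, Real.log_pow]
  have := Real.log_two_gt_d9
  push_cast
  linarith

lemma core (p : ℕ) (hp : 1 ≤ p) : gfun (p+2) - gfun (p+1) < gfun (p+1) - gfun p := by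
  have hp1 : (1:ℝ) ≤ (p:ℝ) := by exact_mod_cast hp
  set a := Real.log (p.factorial) with ha
  set L1 := Real.log ((p:ℝ)+1) with hL1
  set L2 := Real.log ((p:ℝ)+2) with hL2
  have hf1 : Real.log ((p+1).factorial) = a + L1 := by
    rw [Nat.factorial_succ, Nat.cast_mul, Real.log_mul (by positivity) (by
      exact_mod_cast Nat.factorial_pos p |>.ne')]
    push_cast; ring
  have hf2 : Real.log ((p+2).factorial) = a + L1 + L2 := by
    have : p + 2 = (p+1) + 1 := rfl
    rw [this, Nat.factorial_succ, Nat.cast_mul, Real.log_mul (by positivity) (by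
      exact_mod_cast Nat.factorial_pos (p+1) |>.ne'), hf1]
    have h2 : Real.log (((p:ℕ)+1+1 : ℕ):ℝ) = L2 := by
      rw [hL2]; norm_num; ring_nf
    linarith
  -- key inequality
  have hlog_ratio : ((p:ℝ)+1) * (L2 - L1) < 1 := by
    have hx : (0:ℝ) < ((p:ℝ)+2)/((p:ℝ)+1) := by positivity
    have hx1 : ((p:ℝ)+2)/((p:ℝ)+1) ≠ 1 := by
      intro h
      rw [div_eq_one_iff_eq (by positivity)] at h
      linarith
    have := Real.log_lt_sub_one_of_pos hx hx1
    rw [Real.log_div (by positivity) (by positivity)] at this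
    have h2 : ((p:ℝ)+2)/((p:ℝ)+1) - 1 = 1/((p:ℝ)+1) := by
      field_simp
      norm_num
    rw [h2] at this
    calc ((p:ℝ)+1) * (L2 - L1) < ((p:ℝ)+1) * (1/((p:ℝ)+1)) := by
          apply mul_lt_mul_of_pos_left this (by positivity)
      _ = 1 := by field_simp
  have hpair := pairing p
  have h4 := log4_gt_one
  have key : 2*(a + L1) + ((p:ℝ)+1)*(p:ℝ)*L2 < ((p:ℝ)+1)*((p:ℝ)+2)*L1 := by
    nlinarith [hpair, hlog_ratio, h4, hp1]
  -- now the divisions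
  unfold gfun
  rw [hf1, hf2]
  push_cast
  rw [div_sub_div _ _ (by positivity : ((p:ℝ)+2) ≠ 0) (by positivity : ((p:ℝ)+1) ≠ 0),
    div_sub_div _ _ (by positivity : ((p:ℝ)+1) ≠ 0) (by positivity : (p:ℝ) ≠ 0),
    div_lt_div_iff₀ (by positivity) (by positivity)]
  ring_nf
  nlinarith [key, hp1]

lemma Dchain (p : ℕ) (hp : 1 ≤ p) : ∀ q, p < q → gfun (q+1) - gfun q < gfun (p+1) - gfun p := by
  intro q hq
  induction q with
  | zero => omega
  | succ r ih =>
    rcases Nat.lt_or_ge p r with h | h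
    · have hr : 1 ≤ r := by omega
      have h1 := core r hr
      have h2 := ih h
      have hrr : r + 1 + 1 = r + 2 := rfl
      rw [hrr]
      linarith
    · have : p = r := by omega
      subst this
      have := core p hp
      exact this

theorem stmt9 (m t : ℕ) (hm : 2 ≤ m) (ht : 1 ≤ t) :
    ((m + t).factorial : ℝ) ^ ((1 : ℝ) / ((m : ℝ) + (t : ℝ))) *
      ((m - 1).factorial : ℝ) ^ ((1 : ℝ) / ((m : ℝ) - 1)) <
    ((m + t - 1).factorial : ℝ) ^ ((1 : ℝ) / ((m : ℝ) + (t : ℝ) - 1)) *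
      (m.factorial : ℝ) ^ ((1 : ℝ) / (m : ℝ)) := by
  have hmain : gfun (m + t) + gfun (m - 1) < gfun (m + t - 1) + gfun m := by
    have hp : 1 ≤ m - 1 := by omega
    have hq : m - 1 < m + t - 1 := by omega
    have h := Dchain (m-1) hp (m + t - 1) hq
    have e1 : m - 1 + 1 = m := by omega
    have e2 : m + t - 1 + 1 = m + t := by omega
    rw [e1, e2] at h
    linarith
  have hm1 : (1:ℝ) ≤ (m:ℝ) - 1 := by
    have : (2:ℝ) ≤ (m:ℝ) := by exact_mod_cast hm
    linarith
  have ht1 : (1:ℝ) ≤ (t:ℝ) := by exact_mod_cast ht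
  have c1 : ((m + t : ℕ) : ℝ) = (m:ℝ) + (t:ℝ) := by push_cast; ring
  have c2 : ((m - 1 : ℕ) : ℝ) = (m:ℝ) - 1 := by
    rw [Nat.cast_sub (by omega)]; norm_num
  have c3 : ((m + t - 1 : ℕ) : ℝ) = (m:ℝ) + (t:ℝ) - 1 := by
    rw [Nat.cast_sub (by omega)]; push_cast; ring
  have fpos : ∀ n : ℕ, (0:ℝ) < (n.factorial : ℝ) := fun n => by
    exact_mod_cast Nat.factorial_pos n
  have erw : ∀ n : ℕ, ∀ x : ℝ, (n.factorial : ℝ) ^ ((1:ℝ)/x) = Real.exp (Real.log n.factorial * (1/x)) :=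
    fun n x => Real.rpow_def_of_pos (fpos n) _
  rw [← c3, ← c1, ← c2, erw, erw, erw, erw, ← Real.exp_add, ← Real.exp_add]
  apply Real.exp_lt_exp.2
  have gd : ∀ n : ℕ, Real.log n.factorial * (1/(n:ℝ)) = gfun n := fun n => by
    unfold gfun; ring
  rw [gd, gd, gd, gd]
  linarith


end BGM
end

section
/- Let n ≥ 2. A matrix A ∈ 𝒜(n,2) achieves the maximal permanent among matrices in 𝒜(n,2) if and only if its rows and columns can be permuted to yield: J_2 ⊕ J_2 ⊕ ⋯ ⊕ J_2 (n/2 copies of J_2) when n is even, and (J_3 − I_3) ⊕ J_2 ⊕ ⋯ ⊕ J_2 ((n−3)/2 copies of J_2) when n is odd. -/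
open scoped BigOperators

namespace BGM

/-!
Every `A ∈ 𝒜(n, 2)` is `P_σ + P_τ` for permutations with `σ i ≠ τ i` (Hall's theorem, applied
twice). Its permanent counts the permutations `g` with `g i ∈ {σ i, τ i}`, and these correspond
to the products of subsets of the cycles of `σ⁻¹τ`; hence `per A = 2 ^ c`, where `c` is the number
of cycles of the fixed-point-free permutation `σ⁻¹τ`. Such a permutation of `n` points has at most
`⌊n / 2⌋` cycles, with equality exactly for the cycle types `2^(n/2)` and `3 · 2^((n-3)/2)`.
Finally `P_σ + P_τ` and `P_σ' + P_τ'` differ by row and column permutations as soon as `σ⁻¹τ` and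
`σ'⁻¹τ'` are conjugate, i.e. have the same cycle type, and the two matrices of the statement
realise these cycle types.
-/

section CycleType

open Equiv Equiv.Perm Finset

variable {α : Type*} [Fintype α] [DecidableEq α]

def subPerms (π : Perm α) : Finset (Perm α) := {g | ∀ x, g x = x ∨ g x = π x}

lemma mem_subPerms_iff {π g : Perm α} :
    g ∈ subPerms π ↔ g.cycleFactorsFinset ⊆ π.cycleFactorsFinset := by
  simp only [subPerms, mem_filter, mem_univ, true_and]
  constructor
  · intro hg c hc
    rw [mem_cycleFactorsFinset_iff] at hc ⊢
    refine ⟨hc.1, fun a ha => ?_⟩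
    rw [hc.2 a ha]
    exact (hg a).resolve_left (by rw [← hc.2 a ha]; exact mem_support.mp ha)
  · intro h x
    by_cases hx : x ∈ g.support
    · right
      have hmem := h (cycleOf_mem_cycleFactorsFinset_iff.mpr hx)
      rw [← cycleOf_apply_self, ← (mem_cycleFactorsFinset_iff.mp hmem).2 x
        (mem_support_cycleOf_iff.mpr ⟨SameCycle.refl _ _, hx⟩)]
    · exact Or.inl (notMem_support.mp hx)

lemma card_subPerms (π : Perm α) : #(subPerms π) = 2 ^ π.cycleType.card := by
  rw [cycleType_def, Multiset.card_map, ← Finset.card_def, ← card_powerset]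
  refine card_nbij (·.cycleFactorsFinset) (fun g hg => mem_powerset.mpr (mem_subPerms_iff.mp hg))
    (fun g _ g' _ h => cycleFactorsFinset_injective h) fun T hT => ?_
  have hT : T ⊆ π.cycleFactorsFinset := mem_powerset.mp hT
  have hdisj : (T : Set (Perm α)).Pairwise Disjoint :=
    (cycleFactorsFinset_pairwise_disjoint (f := π)).mono (coe_subset.mpr hT)
  have hg : (T.noncommProd id (hdisj.mono' fun _ _ => Disjoint.commute)).cycleFactorsFinset = T :=
    cycleFactorsFinset_eq_finset.mpr
      ⟨fun f hf => (mem_cycleFactorsFinset_iff.mp (hT hf)).1, hdisj, rfl⟩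
  exact ⟨_, mem_subPerms_iff.mpr (by rwa [hg]), hg⟩

lemma card_cycleType_le (π : Perm α) : π.cycleType.card ≤ Fintype.card α / 2 := by
  have h := Multiset.card_nsmul_le_sum fun _ hk => two_le_of_mem_cycleType (σ := π) hk
  have := π.sum_cycleType_le
  rw [smul_eq_mul] at h
  omega

lemma sum_cycleType_of_forall_ne {π : Perm α} (hπ : ∀ x, π x ≠ x) :
    π.cycleType.sum = Fintype.card α := by
  rw [sum_cycleType, eq_univ_of_forall fun x => mem_support.mpr (hπ x), card_univ]

lemma two_mul_card_cycleType_of_sq_eq_one {π : Perm α} (hπ : π ^ 2 = 1) :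
    2 * π.cycleType.card = π.cycleType.sum := by
  have h2 : ∀ k ∈ π.cycleType, k = 2 := fun k hk =>
    le_antisymm (Nat.le_of_dvd two_pos ((dvd_of_mem_cycleType hk).trans
      (orderOf_dvd_of_pow_eq_one hπ))) (two_le_of_mem_cycleType hk)
  rw [Multiset.eq_replicate_card.mpr h2, Multiset.sum_replicate, Multiset.card_replicate,
    smul_eq_mul, mul_comm]

lemma Multiset.eq_replicate_two_of_sum_le {m : Multiset ℕ} (hm : ∀ x ∈ m, 2 ≤ x)
    (hsum : m.sum ≤ 2 * m.card) : m = Multiset.replicate m.card 2 := by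
  refine Multiset.eq_replicate_card.mpr fun x hx => le_antisymm ?_ (hm x hx)
  have herase := Multiset.card_nsmul_le_sum (s := m.erase x) fun y hy =>
    hm y (Multiset.mem_of_mem_erase hy)
  rw [smul_eq_mul, Multiset.card_erase_of_mem hx, Nat.pred_eq_sub_one] at herase
  have := Multiset.sum_erase hx
  have := Multiset.card_pos_iff_exists_mem.mpr ⟨x, hx⟩
  omega

lemma Multiset.eq_cons_three_of_sum_eq {m : Multiset ℕ} (hm : ∀ x ∈ m, 2 ≤ x)
    (hsum : m.sum = 2 * m.card + 1) : m = 3 ::ₘ Multiset.replicate (m.card - 1) 2 := by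
  obtain ⟨x, hx, hx2⟩ : ∃ x ∈ m, x ≠ 2 := by
    by_contra! h
    rw [Multiset.eq_replicate_card.mpr h, Multiset.sum_replicate, Multiset.card_replicate,
      smul_eq_mul] at hsum
    omega
  have hm' : ∀ y ∈ m.erase x, 2 ≤ y := fun y hy => hm y (Multiset.mem_of_mem_erase hy)
  have herase := Multiset.card_nsmul_le_sum hm'
  have hcard : (m.erase x).card = m.card - 1 := by
    rw [Multiset.card_erase_of_mem hx, Nat.pred_eq_sub_one]
  have := Multiset.sum_erase hx
  have := Multiset.card_pos_iff_exists_mem.mpr ⟨x, hx⟩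
  rw [smul_eq_mul, hcard] at herase
  obtain rfl : x = 3 := by have := hm x hx; omega
  conv_lhs => rw [← Multiset.cons_erase hx, eq_replicate_two_of_sum_le hm' (by omega), hcard]

lemma cycleType_eq_of_card_cycleType_eq_half {π π' : Perm α} (hπ : ∀ x, π x ≠ x)
    (hπ' : ∀ x, π' x ≠ x) (h : π.cycleType.card = Fintype.card α / 2)
    (h' : π'.cycleType.card = Fintype.card α / 2) : π.cycleType = π'.cycleType := by
  have hs := sum_cycleType_of_forall_ne hπ
  have hs' := sum_cycleType_of_forall_ne hπ'
  have h2 : ∀ σ : Perm α, ∀ k ∈ σ.cycleType, 2 ≤ k := fun _ _ => two_le_of_mem_cycleType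
  obtain ⟨k, hk | hk⟩ := Nat.even_or_odd' (Fintype.card α)
  · rw [Multiset.eq_replicate_two_of_sum_le (h2 π) (by omega),
      Multiset.eq_replicate_two_of_sum_le (h2 π') (by omega), h, h']
  · rw [Multiset.eq_cons_three_of_sum_eq (h2 π) (by omega),
      Multiset.eq_cons_three_of_sum_eq (h2 π') (by omega), h, h']

end CycleType

section Matrices

open Equiv Equiv.Perm Finset

variable {n : ℕ}

lemma permMatrix_apply {R : Type*} [Zero R] [One R] (σ : Perm (Fin n)) (i j : Fin n) :
    σ.permMatrix R i j = if σ i = j then 1 else 0 := by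
  simp [PEquiv.toMatrix_apply]

lemma perm_eq_permanent (M : Matrix (Fin n) (Fin n) ℕ) : perm M = M.permanent := by
  rw [← Matrix.permanent_transpose]
  rfl

lemma perm_permMatrix_mul (σ : Perm (Fin n)) (M : Matrix (Fin n) (Fin n) ℕ) :
    perm (σ.permMatrix ℕ * M) = perm M := by
  rw [perm_eq_permanent, perm_eq_permanent, PEquiv.toMatrix_toPEquiv_mul,
    Matrix.permanent_permute_cols]

lemma perm_mul_permMatrix (σ : Perm (Fin n)) (M : Matrix (Fin n) (Fin n) ℕ) :
    perm (M * σ.permMatrix ℕ) = perm M := by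
  rw [perm_eq_permanent, perm_eq_permanent, PEquiv.mul_toMatrix_toPEquiv,
    Matrix.permanent_permute_rows]

lemma isPermMatrix_iff {P : Matrix (Fin n) (Fin n) ℕ} :
    IsPermMatrix P ↔ ∃ σ : Perm (Fin n), P = σ.permMatrix ℕ := by
  simp [IsPermMatrix, ← Matrix.ext_iff, eq_comm]

lemma perm_one_add_permMatrix {π : Perm (Fin n)} (hπ : ∀ i, π i ≠ i) :
    perm (1 + π.permMatrix ℕ) = 2 ^ π.cycleType.card := by
  rw [← card_subPerms, perm, subPerms, card_filter]
  refine sum_congr rfl fun g _ => ?_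
  rw [← Fintype.prod_boole]
  refine prod_congr rfl fun i _ => ?_
  have := hπ i
  simp only [Matrix.add_apply, Matrix.one_apply, permMatrix_apply]
  split_ifs <;> grind

lemma inv_mul_apply_ne_self {σ τ : Perm (Fin n)} (h : ∀ i, σ i ≠ τ i) (i : Fin n) :
    (σ⁻¹ * τ) i ≠ i := by
  rw [Perm.mul_apply, Ne, Perm.inv_eq_iff_eq]
  exact (h i).symm

lemma perm_add_permMatrix {σ τ : Perm (Fin n)} (h : ∀ i, σ i ≠ τ i) :
    perm (σ.permMatrix ℕ + τ.permMatrix ℕ) = 2 ^ (σ⁻¹ * τ).cycleType.card := by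
  have hP : σ.permMatrix ℕ + τ.permMatrix ℕ = (1 + (σ⁻¹ * τ).permMatrix ℕ) * σ.permMatrix ℕ := by
    rw [add_mul, one_mul, ← Matrix.permMatrix_mul, mul_inv_cancel_left]
  rw [hP, perm_mul_permMatrix, perm_one_add_permMatrix (inv_mul_apply_ne_self h)]

lemma permMatrix_mem_Aclass_one (σ : Perm (Fin n)) : σ.permMatrix ℕ ∈ Aclass n 1 := by
  refine ⟨fun i j => ?_, fun i => ?_, fun j => ?_⟩
  · rw [permMatrix_apply]
    split_ifs <;> simp
  · simp
  · simp [← Equiv.eq_symm_apply]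

lemma exists_perm_forall_apply_eq_one {k : ℕ} (hk : 0 < k) {A : Matrix (Fin n) (Fin n) ℕ}
    (hA : A ∈ Aclass n k) : ∃ σ : Perm (Fin n), ∀ i, A i (σ i) = 1 := by
  obtain ⟨h01, hrow, hcol⟩ := hA
  let t : Fin n → Finset (Fin n) := fun i => {j | A i j = 1}
  -- Hall's condition, by double counting the ones in the rows indexed by `s`
  have hall : ∀ s : Finset (Fin n), #s ≤ #(s.biUnion t) := fun s => by
    refine Nat.le_of_mul_le_mul_left ?_ hk
    calc k * #s = ∑ i ∈ s, ∑ j ∈ s.biUnion t, A i j := by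
          rw [mul_comm, ← smul_eq_mul, ← sum_const]
          refine sum_congr rfl fun i hi =>
            (hrow i).symm.trans (sum_subset (subset_univ _) fun j _ hj => ?_).symm
          exact (h01 i j).resolve_right fun h => hj (mem_biUnion.mpr ⟨i, hi, by simp [t, h]⟩)
      _ = ∑ j ∈ s.biUnion t, ∑ i ∈ s, A i j := sum_comm
      _ ≤ ∑ j ∈ s.biUnion t, ∑ i, A i j :=
          sum_le_sum fun j _ => sum_le_sum_of_subset (subset_univ _)
      _ = k * #(s.biUnion t) := by simp [hcol, mul_comm]
  obtain ⟨f, hf, hft⟩ := (all_card_le_biUnion_card_iff_exists_injective t).mp hall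
  exact ⟨Equiv.ofBijective f hf.bijective_of_finite, fun i => by simpa [t] using hft i⟩

lemma exists_eq_permMatrix_of_mem_Aclass_one {B : Matrix (Fin n) (Fin n) ℕ}
    (hB : B ∈ Aclass n 1) : ∃ τ : Perm (Fin n), B = τ.permMatrix ℕ := by
  obtain ⟨τ, hτ⟩ := exists_perm_forall_apply_eq_one one_pos hB
  refine ⟨τ, Matrix.ext fun i j => ?_⟩
  rw [permMatrix_apply]
  split_ifs with h
  · rw [← h, hτ]
  · have hsum := add_sum_erase univ (B i) (mem_univ (τ i))
    rw [hB.2.1 i, hτ i, add_eq_left, sum_eq_zero_iff] at hsum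
    exact hsum j (mem_erase.mpr ⟨Ne.symm h, mem_univ j⟩)

lemma permMatrix_add_permMatrix_mem_Aclass_two {σ τ : Perm (Fin n)} (h : ∀ i, σ i ≠ τ i) :
    σ.permMatrix ℕ + τ.permMatrix ℕ ∈ Aclass n 2 := by
  obtain ⟨-, hσr, hσc⟩ := permMatrix_mem_Aclass_one σ
  obtain ⟨-, hτr, hτc⟩ := permMatrix_mem_Aclass_one τ
  refine ⟨fun i j => ?_, fun i => ?_, fun j => ?_⟩
  · have := h i
    simp only [Matrix.add_apply, permMatrix_apply]
    split_ifs <;> simp_all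
  · simp only [Matrix.add_apply, sum_add_distrib, hσr, hτr]
  · simp only [Matrix.add_apply, sum_add_distrib, hσc, hτc]

lemma exists_eq_permMatrix_add_permMatrix {A : Matrix (Fin n) (Fin n) ℕ} (hA : A ∈ Aclass n 2) :
    ∃ σ τ : Perm (Fin n), (∀ i, σ i ≠ τ i) ∧ A = σ.permMatrix ℕ + τ.permMatrix ℕ := by
  obtain ⟨σ, hσ⟩ := exists_perm_forall_apply_eq_one two_pos hA
  let B : Matrix (Fin n) (Fin n) ℕ := Matrix.of fun i j => A i j - σ.permMatrix ℕ i j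
  have hAB : ∀ i j, A i j = B i j + σ.permMatrix ℕ i j := fun i j => by
    simp only [B, Matrix.of_apply, permMatrix_apply]
    split_ifs with h
    · rw [← h, hσ]; rfl
    · rfl
  obtain ⟨-, hσr, hσc⟩ := permMatrix_mem_Aclass_one σ
  have hB : B ∈ Aclass n 1 := by
    refine ⟨fun i j => ?_, fun i => ?_, fun j => ?_⟩
    · rcases hA.1 i j with h | h <;> simp only [B, Matrix.of_apply, h] <;> omega
    · have := hA.2.1 i
      rw [sum_congr rfl fun j _ => hAB i j, sum_add_distrib, hσr] at this
      omega
    · have := hA.2.2 j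
      rw [sum_congr rfl fun i _ => hAB i j, sum_add_distrib, hσc] at this
      omega
  obtain ⟨τ, hτ⟩ := exists_eq_permMatrix_of_mem_Aclass_one hB
  refine ⟨σ, τ, fun i hi => ?_, Matrix.ext fun i j => by rw [hAB, hτ, add_comm]; rfl⟩
  have := hAB i (σ i)
  rw [hσ, hτ, permMatrix_apply, permMatrix_apply, if_pos hi.symm, if_pos rfl] at this
  omega

lemma permMatrix_mul_add_mul (u v σ τ : Perm (Fin n)) :
    u.permMatrix ℕ * (σ.permMatrix ℕ + τ.permMatrix ℕ) * v.permMatrix ℕ =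
      (v * σ * u).permMatrix ℕ + (v * τ * u).permMatrix ℕ := by
  simp [mul_add, add_mul, Matrix.mul_assoc]

lemma exists_permMatrix_mul_add_mul_eq {σ τ σ' τ' : Perm (Fin n)}
    (h : IsConj (σ⁻¹ * τ) (σ'⁻¹ * τ')) : ∃ u v : Perm (Fin n),
      u.permMatrix ℕ * (σ.permMatrix ℕ + τ.permMatrix ℕ) * v.permMatrix ℕ =
        σ'.permMatrix ℕ + τ'.permMatrix ℕ := by
  obtain ⟨c, hc⟩ := isConj_iff.mp h
  -- `v σ u = σ'` and `v τ u = τ'` amount to `u = c⁻¹`, `v = σ' c σ⁻¹` with `c (σ⁻¹τ) c⁻¹ = σ'⁻¹τ'`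
  refine ⟨c⁻¹, σ' * c * σ⁻¹, ?_⟩
  rw [permMatrix_mul_add_mul, show σ' * c * σ⁻¹ * τ * c⁻¹ = σ' * (c * (σ⁻¹ * τ) * c⁻¹) by group,
    hc]
  congr 2 <;> group

lemma perm_le_of_mem_Aclass_two {B : Matrix (Fin n) (Fin n) ℕ} (hB : B ∈ Aclass n 2) :
    perm B ≤ 2 ^ (n / 2) := by
  obtain ⟨σ, τ, h, rfl⟩ := exists_eq_permMatrix_add_permMatrix hB
  rw [perm_add_permMatrix h]
  exact Nat.pow_le_pow_right two_pos ((card_cycleType_le _).trans_eq (by rw [Fintype.card_fin]))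

lemma blockIdx_replicate_two (k i : ℕ) : blockIdx (List.replicate k 2) i = min (i / 2) k := by
  induction k generalizing i with
  | zero => simp [blockIdx]
  | succ k ih =>
    rw [List.replicate_succ, blockIdx, ih]
    split_ifs <;> omega

def pairSwapNat (n m i : ℕ) : ℕ :=
  if m ≤ i ∧ (i - m) % 2 = 0 ∧ i + 1 < n then i + 1
  else if m < i ∧ (i - m) % 2 = 1 then i - 1 else i

lemma pairSwapNat_lt {m i : ℕ} (hi : i < n) : pairSwapNat n m i < n := by
  unfold pairSwapNat
  split_ifs <;> omega

lemma pairSwapNat_pairSwapNat {m i : ℕ} (hi : i < n) :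
    pairSwapNat n m (pairSwapNat n m i) = i := by
  unfold pairSwapNat
  split_ifs <;> omega

def pairSwap (m : ℕ) : Perm (Fin n) :=
  Function.Involutive.toPerm (fun i => ⟨pairSwapNat n m i, pairSwapNat_lt i.isLt⟩)
    fun i => Fin.ext (pairSwapNat_pairSwapNat i.isLt)

lemma val_pairSwap (m : ℕ) (i : Fin n) : (pairSwap m i : ℕ) = pairSwapNat n m i := rfl

lemma pairSwap_sq (m : ℕ) : (pairSwap m : Perm (Fin n)) ^ 2 = 1 :=
  Equiv.ext fun i => Fin.ext (pairSwapNat_pairSwapNat i.isLt)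

lemma val_cycleRange_two (h : 2 < n) (i : Fin n) : (Fin.cycleRange ⟨2, h⟩ i : ℕ) =
    if (i : ℕ) < 2 then (i : ℕ) + 1 else if (i : ℕ) = 2 then 0 else (i : ℕ) := by
  split_ifs with h1 h2
  · exact Fin.coe_cycleRange_of_lt (Fin.lt_def.mpr h1)
  · rw [Fin.coe_cycleRange_of_le (Fin.le_def.mpr h2.le), if_pos (Fin.ext h2)]
  · rw [Fin.cycleRange_of_gt (Fin.lt_def.mpr (by dsimp only; omega))]

lemma listBlocks_eq (h : Even n) : listBlocks n (List.replicate (n / 2) 2) =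
    (1 : Perm (Fin n)).permMatrix ℕ + (pairSwap 0 : Perm (Fin n)).permMatrix ℕ := by
  obtain ⟨k, rfl⟩ := h
  ext i j
  have := i.isLt
  have := j.isLt
  simp only [listBlocks, Matrix.of_apply, Matrix.add_apply, permMatrix_apply, Fin.ext_iff,
    val_pairSwap, pairSwapNat, Perm.one_apply, blockIdx_replicate_two]
  split_ifs <;> omega

lemma val_cycleRange_two_mul_pairSwap_mul (h3 : 3 ≤ n) (i : Fin n) :
    ((Fin.cycleRange ⟨2, h3⟩ * pairSwap 3 * Fin.cycleRange ⟨2, h3⟩ : Perm (Fin n)) i : ℕ) =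
      if (i : ℕ) < 3 then ((i : ℕ) + 2) % 3 else pairSwapNat n 3 i := by
  simp only [Perm.mul_apply, val_cycleRange_two, val_pairSwap]
  unfold pairSwapNat
  split_ifs <;> omega

lemma headBlocks_eq (h3 : 3 ≤ n) (hodd : ¬Even n) :
    headBlocks n J3mI3 (List.replicate ((n - 3) / 2) 2) =
      (Fin.cycleRange ⟨2, h3⟩).permMatrix ℕ +
        (Fin.cycleRange ⟨2, h3⟩ * pairSwap 3 * Fin.cycleRange ⟨2, h3⟩).permMatrix ℕ := by
  rw [Nat.not_even_iff_odd] at hodd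
  obtain ⟨k, rfl⟩ := hodd
  ext i j
  have := i.isLt
  have := j.isLt
  simp only [headBlocks, J3mI3, Matrix.of_apply, Matrix.add_apply, permMatrix_apply, Fin.ext_iff,
    val_cycleRange_two_mul_pairSwap_mul, pairSwapNat, val_cycleRange_two, blockIdx_replicate_two]
  split_ifs <;> omega

def extremal (n : ℕ) : Matrix (Fin n) (Fin n) ℕ :=
  if Even n then listBlocks n (List.replicate (n / 2) 2)
  else headBlocks n J3mI3 (List.replicate ((n - 3) / 2) 2)

lemma eq_extremal_iff {M : Matrix (Fin n) (Fin n) ℕ} :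
    (Even n ∧ M = listBlocks n (List.replicate (n / 2) 2)) ∨
      (¬Even n ∧ M = headBlocks n J3mI3 (List.replicate ((n - 3) / 2) 2)) ↔ M = extremal n := by
  unfold extremal
  split_ifs with h <;> simp [h]

lemma exists_listBlocks_eq_permMatrix_add_permMatrix (he : Even n) :
    ∃ σ τ : Perm (Fin n), (∀ i, σ i ≠ τ i) ∧ (σ⁻¹ * τ).cycleType.card = n / 2 ∧
      listBlocks n (List.replicate (n / 2) 2) = σ.permMatrix ℕ + τ.permMatrix ℕ := by
  have hne : ∀ i : Fin n, (1 : Perm (Fin n)) i ≠ pairSwap 0 i := fun i h => by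
    obtain ⟨k, rfl⟩ := he
    have hv := congrArg Fin.val h
    have := i.isLt
    simp only [Perm.one_apply, val_pairSwap, pairSwapNat] at hv
    split_ifs at hv <;> omega
  refine ⟨1, pairSwap 0, hne, ?_, listBlocks_eq he⟩
  have hd := inv_mul_apply_ne_self hne
  rw [inv_one, one_mul] at hd ⊢
  have h2 := two_mul_card_cycleType_of_sq_eq_one (pairSwap_sq 0 (n := n))
  rw [sum_cycleType_of_forall_ne hd, Fintype.card_fin] at h2
  omega

lemma exists_headBlocks_eq_permMatrix_add_permMatrix (h3 : 3 ≤ n) (hodd : ¬Even n) :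
    ∃ σ τ : Perm (Fin n), (∀ i, σ i ≠ τ i) ∧ (σ⁻¹ * τ).cycleType.card = n / 2 ∧
      headBlocks n J3mI3 (List.replicate ((n - 3) / 2) 2) =
        σ.permMatrix ℕ + τ.permMatrix ℕ := by
  have : NeZero n := ⟨by omega⟩
  set c : Perm (Fin n) := Fin.cycleRange ⟨2, h3⟩
  set s : Perm (Fin n) := pairSwap 3
  obtain ⟨k, rfl⟩ := Nat.not_even_iff_odd.mp hodd
  have hne : ∀ i, c i ≠ (c * s * c) i := fun i h => by
    have hv := congrArg Fin.val h
    have := i.isLt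
    rw [val_cycleRange_two, val_cycleRange_two_mul_pairSwap_mul, pairSwapNat] at hv
    split_ifs at hv <;> omega
  refine ⟨c, c * s * c, hne, ?_, headBlocks_eq h3 hodd⟩
  have hdisj : Disjoint s c := fun i => by
    by_cases hi : (i : ℕ) < 3
    · left
      ext
      rw [val_pairSwap, pairSwapNat]
      split_ifs <;> omega
    · exact Or.inr (Fin.cycleRange_of_gt (Fin.lt_def.mpr (by dsimp only; omega)))
  have hd := inv_mul_apply_ne_self hne
  rw [show c⁻¹ * (c * s * c) = s * c by group] at hd ⊢
  have hsum := sum_cycleType_of_forall_ne hd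
  have h2 := two_mul_card_cycleType_of_sq_eq_one (show s ^ 2 = 1 from pairSwap_sq 3)
  rw [hdisj.cycleType_mul, Fin.cycleType_cycleRange (by simp [Fin.ext_iff])] at hsum ⊢
  simp only [Multiset.sum_add, Multiset.card_add, Multiset.sum_singleton,
    Multiset.card_singleton, Fintype.card_fin] at hsum ⊢
  omega

lemma exists_extremal_eq_permMatrix_add_permMatrix (hn : 2 ≤ n) :
    ∃ σ τ : Perm (Fin n), (∀ i, σ i ≠ τ i) ∧ (σ⁻¹ * τ).cycleType.card = n / 2 ∧
      extremal n = σ.permMatrix ℕ + τ.permMatrix ℕ := by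
  unfold extremal
  split_ifs with he
  · exact exists_listBlocks_eq_permMatrix_add_permMatrix he
  · obtain ⟨k, rfl⟩ := Nat.not_even_iff_odd.mp he
    exact exists_headBlocks_eq_permMatrix_add_permMatrix (by omega) he

lemma perm_mul_mul_of_isPermMatrix {P Q : Matrix (Fin n) (Fin n) ℕ} (hP : IsPermMatrix P)
    (hQ : IsPermMatrix Q) (M : Matrix (Fin n) (Fin n) ℕ) : perm (P * M * Q) = perm M := by
  obtain ⟨u, rfl⟩ := isPermMatrix_iff.mp hP
  obtain ⟨v, rfl⟩ := isPermMatrix_iff.mp hQ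
  rw [perm_mul_permMatrix, perm_permMatrix_mul]

end Matrices

theorem stmt16 (n : ℕ) (hn : 2 ≤ n) (A : Matrix (Fin n) (Fin n) ℕ)
    (hA : A ∈ Aclass n 2) :
    (∀ B ∈ Aclass n 2, perm B ≤ perm A) ↔
      ∃ P Q, IsPermMatrix P ∧ IsPermMatrix Q ∧
        ((Even n ∧ P * A * Q = listBlocks n (List.replicate (n / 2) 2)) ∨
         (¬ Even n ∧ P * A * Q = headBlocks n J3mI3 (List.replicate ((n - 3) / 2) 2))) := by
  obtain ⟨σ, τ, hστ, rfl⟩ := exists_eq_permMatrix_add_permMatrix hA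
  obtain ⟨σ₀, τ₀, hστ₀, hcard₀, hext⟩ := exists_extremal_eq_permMatrix_add_permMatrix hn
  simp only [eq_extremal_iff, hext]
  constructor
  · intro hmax
    have hcard : (σ⁻¹ * τ).cycleType.card = n / 2 := by
      refine le_antisymm ((card_cycleType_le _).trans_eq (by rw [Fintype.card_fin])) ?_
      have := hmax _ (permMatrix_add_permMatrix_mem_Aclass_two hστ₀)
      rwa [perm_add_permMatrix hστ₀, perm_add_permMatrix hστ, hcard₀,
        Nat.pow_le_pow_iff_right one_lt_two] at this
    obtain ⟨u, v, huv⟩ := exists_permMatrix_mul_add_mul_eq (Equiv.Perm.isConj_iff_cycleType_eq.mpr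
      (cycleType_eq_of_card_cycleType_eq_half (inv_mul_apply_ne_self hστ)
        (inv_mul_apply_ne_self hστ₀) (by rw [hcard, Fintype.card_fin])
        (by rw [hcard₀, Fintype.card_fin])))
    exact ⟨_, _, isPermMatrix_iff.mpr ⟨u, rfl⟩, isPermMatrix_iff.mpr ⟨v, rfl⟩, huv⟩
  · rintro ⟨P, Q, hP, hQ, hPAQ⟩ B hB
    rw [← perm_mul_mul_of_isPermMatrix hP hQ (σ.permMatrix ℕ + τ.permMatrix ℕ), hPAQ,
      perm_add_permMatrix hστ₀, hcard₀]
    exact perm_le_of_mem_Aclass_two hB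

end BGM
end
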